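/- Fix $r > 0$, $0 < \alpha \le 1$, $p \ge 1$, $N \ge 2$, and constants $0 < c \le C$. Suppose that for every function $v : \overline{B_r} \to \mathbb{R}$ in a class $\Sigma$ it holds that for each boundary point $x \in S_r$ and each $\sigma \in (0, r)$ there is a point $y = x - \sigma x/r$ with $|v(x) - v_{B_r}| \le |v(y) - v_{B_r}| + [v]_{\alpha,B_r}(\sigma/r)^{\alpha}$ and $|v(y) - v_{B_r}| \le (C/(c))^{N/p} (\sigma/r)^{-N/p}\, \|v - v_{B_r}\|_{p,B_r}$, where $\|w\|_{p,B_r} = \left(\frac{1}{|B_r|}\int_{B_r}|w|^p\right)^{1/p}$ and $[v]_{\alpha,B_r}$ is the scaling-invariant Hölder seminorm with constant $r^\alpha$. Then for every $v \in \Sigma$: $\max_{S_r} v - \min_{S_r} v \le 2\left(1 + \frac{\alpha p}{N}\right)\left(\frac{N}{\alpha p}\right)^{\alpha p/(N+\alpha p)}\left(\frac{C}{c}\right)^{\alpha N/(N+\alpha p)}\,[v]_{\alpha,B_r}^{N/(N+\alpha p)}\,\|v - v_{B_r}\|_{p,B_r}^{\alpha p/(N+\alpha p)}$. -/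

import Mathlib

/-!
Along the ray from a boundary point `x` towards the centre, the two pointwise estimates give
`|v x - vavg| ≤ S t ^ α + B t ^ (-N / p)` for every `t ∈ (0, 1)`, with `B = (C / c) ^ (N / p) L`.
The minimum of `S t ^ a + B t ^ (-b)` over `t > 0` is `interpolationBound a b S B`, attained at
`t = (b B / (a S)) ^ (1 / (a + b))`. If this minimiser lies in `(0, 1)` we bound `v` on the sphere
by it; otherwise `S a / b ≤ B`, and then the Hölder bound `v x1 - v x2 ≤ 2 S` is already smaller.
-/

open Metric Set Filter Topology

noncomputable def interpolationBound (a b S B : ℝ) : ℝ :=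
  (1 + a / b) * (b / a) ^ (a / (a + b)) * S ^ (b / (a + b)) * B ^ (a / (a + b))

section Interpolation

variable {a b : ℝ} (ha : 0 < a) (hb : 0 < b)
include ha hb

lemma interpolationBound_nonneg {S B : ℝ} (hS : 0 ≤ S) (hB : 0 ≤ B) :
    0 ≤ interpolationBound a b S B := by
  unfold interpolationBound
  positivity

lemma interpolationBound_mul_eq {S X : ℝ} (hS : 0 < S) (hX : 0 ≤ X) :
    interpolationBound a b S (S * (a / b) * X) = (1 + a / b) * (S * X ^ (a / (a + b))) := by
  have hsplit : S = S ^ (b / (a + b)) * S ^ (a / (a + b)) := by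
    rw [← Real.rpow_add hS, ← add_div, add_comm, div_self (by positivity), Real.rpow_one]
  have hcancel : (b / a) ^ (a / (a + b)) * (S * (a / b)) ^ (a / (a + b)) = S ^ (a / (a + b)) := by
    rw [← Real.mul_rpow (by positivity) (by positivity)]
    congr 1
    field_simp
  rw [interpolationBound, Real.mul_rpow (by positivity) hX]
  conv_rhs => rw [hsplit, ← hcancel]
  ring

lemma interpolationBound_le_interpolationBound {S B B' : ℝ} (hS : 0 ≤ S) (hB : 0 ≤ B)
    (hBB' : B ≤ B') : interpolationBound a b S B ≤ interpolationBound a b S B' := by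
  unfold interpolationBound
  gcongr

lemma le_interpolationBound_of_mul_le {S B : ℝ} (hS : 0 ≤ S) (h : S * (a / b) ≤ B) :
    S ≤ interpolationBound a b S B := by
  rcases hS.eq_or_lt with rfl | hS
  · exact interpolationBound_nonneg ha hb le_rfl (by simpa using h)
  calc S ≤ (1 + a / b) * S := le_mul_of_one_le_left hS.le (by linarith [div_pos ha hb])
    _ = interpolationBound a b S (S * (a / b) * 1) := by
        rw [interpolationBound_mul_eq ha hb hS zero_le_one, Real.one_rpow, mul_one]
    _ ≤ interpolationBound a b S B :=
        interpolationBound_le_interpolationBound ha hb hS.le (by positivity) (by simpa using h)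

/-- The critical point of `t ↦ S t ^ a + B t ^ (-b)` on `t > 0`, where the two terms are in
ratio `b : a`. -/
lemma mul_rpow_add_mul_rpow_neg_eq_interpolationBound {S B t : ℝ} (hS : 0 < S) (hB : 0 < B)
    (ht : 0 < t) (htab : t ^ (a + b) = B * b / (S * a)) :
    S * t ^ a + B * t ^ (-b) = interpolationBound a b S B := by
  have hX : 0 < B * b / (S * a) := by positivity
  have hneg : B * t ^ (-b) = a / b * (S * t ^ a) := by
    have : t ^ a = t ^ (a + b) * t ^ (-b) := by rw [← Real.rpow_add ht]; ring_nf
    rw [this, htab]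
    field_simp
  have hB' : B = S * (a / b) * (B * b / (S * a)) := by field_simp
  rw [hneg, hB', interpolationBound_mul_eq ha hb hS hX.le, ← htab, ← Real.rpow_mul ht.le,
    mul_div_cancel₀ a (by positivity)]
  ring

lemma le_interpolationBound_of_forall_le {S B y : ℝ} (hB : 0 ≤ B) (hlt : B < S * (a / b))
    (h : ∀ t ∈ Ioo (0 : ℝ) 1, y ≤ S * t ^ a + B * t ^ (-b)) :
    y ≤ interpolationBound a b S B := by
  have hS : 0 < S := pos_of_mul_pos_left (hB.trans_lt hlt) (by positivity)
  rcases hB.eq_or_lt with rfl | hB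
  · have hlim : Tendsto (fun t : ℝ => S * t ^ a) (𝓝[>] 0) (𝓝 0) := by
      simpa [Real.zero_rpow ha.ne'] using
        (((Real.continuous_rpow_const ha.le).tendsto 0).mono_left nhdsWithin_le_nhds).const_mul S
    have hzero : interpolationBound a b S 0 = 0 := by
      simp [interpolationBound, Real.zero_rpow (by positivity : a / (a + b) ≠ 0)]
    rw [hzero]
    refine ge_of_tendsto hlim ?_
    filter_upwards [Ioo_mem_nhdsGT zero_lt_one] with t ht
    simpa using h t ht
  · have hX : 0 < B * b / (S * a) := by positivity
    have hX1 : B * b / (S * a) < 1 := by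
      rw [div_lt_one (by positivity)]
      calc B * b < S * (a / b) * b := by gcongr
        _ = S * a := by field_simp
    have ht : (B * b / (S * a)) ^ (a + b)⁻¹ ∈ Ioo (0 : ℝ) 1 :=
      ⟨Real.rpow_pos_of_pos hX _, Real.rpow_lt_one hX.le hX1 (by positivity)⟩
    exact (h _ ht).trans_eq (mul_rpow_add_mul_rpow_neg_eq_interpolationBound ha hb hS hB ht.1
      (Real.rpow_inv_rpow hX.le (by positivity)))

end Interpolation

lemma interpolationBound_div_eq {α p n K S L : ℝ} (hα : 0 < α) (hp : 0 < p) (hn : 0 < n)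
    (hK : 0 ≤ K) (hL : 0 ≤ L) :
    interpolationBound α (n / p) S (K ^ (n / p) * L) =
      (1 + α * p / n) * (n / (α * p)) ^ (α * p / (n + α * p)) *
        K ^ (α * n / (n + α * p)) * S ^ (n / (n + α * p)) * L ^ (α * p / (n + α * p)) := by
  have ea : α / (α + n / p) = α * p / (n + α * p) := by field_simp; ring
  have eb : n / p / (α + n / p) = n / (n + α * p) := by field_simp; ring
  have eK : n / p * (α * p / (n + α * p)) = α * n / (n + α * p) := by field_simp
  rw [interpolationBound, Real.mul_rpow (by positivity) hL, ← Real.rpow_mul hK, ea, eb, eK,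
    div_div_eq_mul_div, div_div, mul_comm p α]
  ring

lemma forall_Ioo_one_of_forall_Ioo_div {r : ℝ} (hr : 0 < r) {P : ℝ → Prop}
    (h : ∀ σ ∈ Ioo (0 : ℝ) r, P (σ / r)) : ∀ t ∈ Ioo (0 : ℝ) 1, P t := by
  intro t ht
  simpa [hr.ne'] using h (t * r) ⟨by nlinarith [ht.1], by nlinarith [ht.2]⟩

section Sphere

variable {E : Type*} [SeminormedAddCommGroup E] {r α : ℝ}

lemma rpow_norm_sub_div_le_two (hr : 0 < r) (hα : α ∈ Ioc (0 : ℝ) 1) {x y : E}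
    (hx : x ∈ sphere 0 r) (hy : y ∈ sphere 0 r) : (‖x - y‖ / r) ^ α ≤ 2 := by
  have hxy : ‖x - y‖ / r ≤ 2 := by
    rw [div_le_iff₀ hr]
    calc ‖x - y‖ ≤ ‖x‖ + ‖y‖ := norm_sub_le x y
      _ = 2 * r := by rw [mem_sphere_zero_iff_norm.mp hx, mem_sphere_zero_iff_norm.mp hy]; ring
  calc (‖x - y‖ / r) ^ α ≤ 2 ^ α := by gcongr; exact hα.1.le
    _ ≤ 2 ^ (1 : ℝ) := Real.rpow_le_rpow_of_exponent_le one_le_two hα.2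
    _ = 2 := Real.rpow_one 2

lemma sub_le_two_mul_of_holder (hr : 0 < r) (hα : α ∈ Ioc (0 : ℝ) 1) {S : ℝ} (hS : 0 ≤ S)
    {v : E → ℝ} (hHol : ∀ x1 ∈ closedBall (0 : E) r, ∀ x2 ∈ closedBall (0 : E) r,
      |v x1 - v x2| ≤ S * (‖x1 - x2‖ / r) ^ α)
    {x y : E} (hx : x ∈ sphere 0 r) (hy : y ∈ sphere 0 r) : v x - v y ≤ 2 * S :=
  calc v x - v y ≤ S * (‖x - y‖ / r) ^ α :=
        (le_abs_self _).trans (hHol x (sphere_subset_closedBall hx) y (sphere_subset_closedBall hy))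
    _ ≤ S * 2 := by gcongr; exact rpow_norm_sub_div_le_two hr hα hx hy
    _ = 2 * S := mul_comm S 2

end Sphere

/-- Abstract version of Lemma 2.2: from the Hölder seminorm bound and the two
pointwise estimates (from the mean value property), the oscillation of `v` on
the sphere `S_r` satisfies the interpolation inequality. Here `S` plays the role
of `[v]_{α,B_r}` and `L` of `‖v - v_{B_r}‖_{p,B_r}`. -/
theorem stmt9 (N : ℕ) (hN : 2 ≤ N) (r α p c C S L : ℝ) (hr : 0 < r)
    (hα : α ∈ Ioc (0 : ℝ) 1) (hp : 1 ≤ p) (hc : 0 < c) (hcC : c ≤ C)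
    (hS : 0 ≤ S) (hL : 0 ≤ L)
    (v : EuclideanSpace ℝ (Fin N) → ℝ) (vavg : ℝ)
    (hHol : ∀ x1 ∈ closedBall (0 : EuclideanSpace ℝ (Fin N)) r,
      ∀ x2 ∈ closedBall (0 : EuclideanSpace ℝ (Fin N)) r,
        |v x1 - v x2| ≤ S * (‖x1 - x2‖ / r) ^ α)
    (hest : ∀ x ∈ sphere (0 : EuclideanSpace ℝ (Fin N)) r, ∀ σ ∈ Ioo (0 : ℝ) r,
      |v x - vavg| ≤ |v (x - (σ / r) • x) - vavg| + S * (σ / r) ^ α ∧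
      |v (x - (σ / r) • x) - vavg| ≤ (C / c) ^ ((N : ℝ) / p) * (σ / r) ^ (-(N : ℝ) / p) * L) :
    ∀ x1 ∈ sphere (0 : EuclideanSpace ℝ (Fin N)) r,
      ∀ x2 ∈ sphere (0 : EuclideanSpace ℝ (Fin N)) r,
        v x1 - v x2 ≤ 2 * (1 + α * p / N) * (N / (α * p)) ^ (α * p / (N + α * p)) *
          (C / c) ^ (α * N / (N + α * p)) * S ^ ((N : ℝ) / (N + α * p)) *
          L ^ (α * p / (N + α * p)) := by
  intro x1 hx1 x2 hx2
  have hN0 : (0 : ℝ) < N := by exact_mod_cast (by omega : 0 < N)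
  have hp0 : 0 < p := zero_lt_one.trans_le hp
  have hCc : 0 ≤ C / c := div_nonneg (hc.le.trans hcC) hc.le
  have hb : (0 : ℝ) < N / p := div_pos hN0 hp0
  have hB : 0 ≤ (C / c) ^ ((N : ℝ) / p) * L := mul_nonneg (Real.rpow_nonneg hCc _) hL
  have hosc : v x1 - v x2 ≤ 2 * interpolationBound α (N / p) S ((C / c) ^ ((N : ℝ) / p) * L) := by
    by_cases hcase : S * (α / (N / p)) ≤ (C / c) ^ ((N : ℝ) / p) * L
    · linarith [sub_le_two_mul_of_holder hr hα hS hHol hx1 hx2,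
        le_interpolationBound_of_mul_le hα.1 hb hS hcase]
    · have hsphere : ∀ x ∈ sphere (0 : EuclideanSpace ℝ (Fin N)) r,
          |v x - vavg| ≤ interpolationBound α (N / p) S ((C / c) ^ ((N : ℝ) / p) * L) := by
        intro x hx
        refine le_interpolationBound_of_forall_le hα.1 hb hB (not_le.mp hcase)
          (forall_Ioo_one_of_forall_Ioo_div hr fun σ hσ => ?_)
        obtain ⟨hnear, hfar⟩ := hest x hx σ hσ
        rw [neg_div] at hfar
        linarith
      linarith [le_abs_self (v x1 - vavg), neg_abs_le (v x2 - vavg), hsphere x1 hx1,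
        hsphere x2 hx2]
  rw [interpolationBound_div_eq hα.1 hp0 hN0 hCc hL] at hosc
  linarith
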